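/- There exist constants C > 0 and c > 0 such that F_b(r) ≤ C·exp(−c·r²) for all r ≥ 1; that is, the Green kernel of the Landau Hamiltonian decays as a Gaussian as |x−y| → ∞. -/

import Mathlib

/-!
Since `tanh ≤ 1`, the factor `exp (-b r² / (4 tanh (bs)))` is at most `exp (-b (r² - 1) / 4)`
times the same factor at `r = 1`. At `r = 1` the bound `x e^{-x} ≤ e^{-1}` turns
`exp (-b / (4 tanh (bs)))` into `O(tanh (bs))`, which cancels the singularity of `1 / sinh (bs)`
at `s = 0` and leaves `O(1 / cosh (bs)) = O(e^{-bs})`, integrable on `(0, ∞)`.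
-/

open MeasureTheory

/-- The radial profile of the (modulus of the) integral kernel of the resolvent of the
Landau Hamiltonian with magnetic field `b`:
`F_b(r) = ∫₀^∞ (b/(4π sinh(bs))) exp(−b r²/(4 tanh(bs))) ds`. -/
noncomputable def Fb (b r : ℝ) : ℝ :=
  ∫ s in Set.Ioi (0 : ℝ),
    b / (4 * Real.pi * Real.sinh (b * s)) * Real.exp (-(b * r ^ 2) / (4 * Real.tanh (b * s)))

open Real Set

lemma Real.tanh_pos_of_pos {t : ℝ} (ht : 0 < t) : 0 < tanh t := by
  rw [tanh_eq_sinh_div_cosh]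
  exact div_pos (sinh_pos_iff.mpr ht) (cosh_pos t)

lemma Real.inv_cosh_le_two_mul_exp_neg (t : ℝ) : (cosh t)⁻¹ ≤ 2 * exp (-t) := by
  have h : exp (-t) * exp t = 1 := by rw [← exp_add, neg_add_cancel, exp_zero]
  rw [inv_le_iff_one_le_mul₀ (cosh_pos t), cosh_eq]
  nlinarith [exp_pos (-t)]

lemma Real.exp_neg_le_exp_neg_one_div {x : ℝ} (hx : 0 < x) : exp (-x) ≤ exp (-1) / x := by
  rw [le_div_iff₀ hx, mul_comm]
  exact mul_exp_neg_le_exp_neg_one x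

lemma Real.exp_neg_div_le_of_le_one {a a₀ τ : ℝ} (ha : a₀ ≤ a) (hτ : 0 < τ)
    (hτ₁ : τ ≤ 1) :
    exp (-a / τ) ≤ exp (a₀ - a) * exp (-a₀ / τ) := by
  rw [← exp_add, exp_le_exp]
  have hdiv : a - a₀ ≤ (a - a₀) / τ := le_div_self (sub_nonneg.mpr ha) hτ hτ₁
  have hsplit : -a / τ = -((a - a₀) / τ) + -a₀ / τ := by field_simp; ring
  linarith

lemma Real.exp_neg_div_tanh_div_sinh_le {a t : ℝ} (ha : 0 < a) (ht : 0 < t) :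
    exp (-a / tanh t) / sinh t ≤ 2 * exp (-1) / a * exp (-t) := by
  have hτ := tanh_pos_of_pos ht
  calc exp (-a / tanh t) / sinh t
      ≤ exp (-1) / (a / tanh t) / sinh t := by
        rw [neg_div]
        gcongr
        exact exp_neg_le_exp_neg_one_div (div_pos ha hτ)
    _ = exp (-1) / a * (cosh t)⁻¹ := by
        rw [tanh_eq_sinh_div_cosh]
        field_simp [(sinh_pos_iff.mpr ht).ne']
    _ ≤ exp (-1) / a * (2 * exp (-t)) := by gcongr; exact inv_cosh_le_two_mul_exp_neg t
    _ = 2 * exp (-1) / a * exp (-t) := by ring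

lemma Fb_integrand_le {b r s : ℝ} (hb : 0 < b) (hr : 1 ≤ r) (hs : 0 < s) :
    b / (4 * π * sinh (b * s)) * exp (-(b * r ^ 2) / (4 * tanh (b * s)))
      ≤ exp (b / 4 - b * r ^ 2 / 4) * (2 * exp (-1) / π * exp (-b * s)) := by
  have ht : 0 < b * s := mul_pos hb hs
  have hτ := tanh_pos_of_pos ht
  have hgauss : exp (-(b * r ^ 2) / (4 * tanh (b * s)))
      ≤ exp (b / 4 - b * r ^ 2 / 4) * exp (-(b / 4) / tanh (b * s)) := by
    rw [show -(b * r ^ 2) / (4 * tanh (b * s)) = -(b * r ^ 2 / 4) / tanh (b * s) by ring]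
    refine exp_neg_div_le_of_le_one ?_ hτ (tanh_lt_one _).le
    nlinarith [one_le_pow₀ (n := 2) hr]
  have hsing := exp_neg_div_tanh_div_sinh_le (div_pos hb four_pos) ht
  calc b / (4 * π * sinh (b * s)) * exp (-(b * r ^ 2) / (4 * tanh (b * s)))
      ≤ b / (4 * π * sinh (b * s)) *
          (exp (b / 4 - b * r ^ 2 / 4) * exp (-(b / 4) / tanh (b * s))) := by
        gcongr
    _ = exp (b / 4 - b * r ^ 2 / 4) * (b / (4 * π) *
          (exp (-(b / 4) / tanh (b * s)) / sinh (b * s))) := by ring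
    _ ≤ exp (b / 4 - b * r ^ 2 / 4) *
          (b / (4 * π) * (2 * exp (-1) / (b / 4) * exp (-(b * s)))) := by
        gcongr
    _ = exp (b / 4 - b * r ^ 2 / 4) * (2 * exp (-1) / π * exp (-b * s)) := by
        rw [neg_mul]
        field_simp

/-- Gaussian decay of the Green kernel of the Landau Hamiltonian away from the diagonal:
there are constants `C > 0` and `c > 0` with `F_b(r) ≤ C exp(−c r²)` for all `r ≥ 1`. -/
theorem Fb_gaussian_decay (b : ℝ) (hb : 0 < b) :
    ∃ C > (0 : ℝ), ∃ c > (0 : ℝ),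
      ∀ r : ℝ, 1 ≤ r → Fb b r ≤ C * Real.exp (-c * r ^ 2) := by
  refine ⟨exp (b / 4) * (2 * exp (-1) / π / b), by positivity, b / 4, by positivity,
    fun r hr ↦ ?_⟩
  have hexp : IntegrableOn (fun s ↦ exp (-b * s)) (Ioi 0) :=
    integrableOn_exp_mul_Ioi (neg_lt_zero.mpr hb) 0
  calc Fb b r
      ≤ ∫ s in Ioi (0 : ℝ),
          exp (b / 4 - b * r ^ 2 / 4) * (2 * exp (-1) / π * exp (-b * s)) := by
        refine integral_mono_of_nonneg ?_ ((hexp.const_mul _).const_mul _) ?_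
        all_goals filter_upwards [ae_restrict_mem measurableSet_Ioi] with s (hs : 0 < s)
        · have := sinh_pos_iff.mpr (mul_pos hb hs)
          positivity
        · exact Fb_integrand_le hb hr hs
    _ = exp (b / 4) * (2 * exp (-1) / π / b) * exp (-(b / 4) * r ^ 2) := by
        rw [integral_const_mul, integral_const_mul, integral_exp_mul_Ioi (neg_lt_zero.mpr hb),
          sub_eq_add_neg, exp_add]
        simp only [mul_zero, exp_zero]
        ring_nf
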